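/- Let (v, P) be a helical solution pair of the incompressible Euler equations ∂ₜv + (v·∇)v = −∇P, div v = 0 on Ω × (0,T) with v·n = 0 on ∂Ω, where Ω ⊆ ℝ³ is a helical domain with simply-connected bounded smooth cross-section D = {(x₁,x₂) : (x₁,x₂,0) ∈ Ω}, v is C² and P is C¹. Let w₃ be the third component of the vorticity ∇×v, let v_ξ = v·ξ be the helical swirl, and set v(x₁,x₂,t) = v_ξ(x₁,x₂,0,t) and w(x₁,x₂,t) = w₃(x₁,x₂,0,t) for (x₁,x₂) ∈ D. Let φ(·,t) be the stream function of the orthogonal part u = v − v_ξ ξ/|ξ|² on D (φ = 0 on ∂D, (u₁,u₂)(x₁,x₂,0,t) = |ξ|⁻² ((−x₁x₂, h²+x₁²), (−(h²+x₂²), x₁x₂)) ∇φ(x₁,x₂,t)). Then on D × (0,T): (i) ∂ₜv + ∇⊥φ·∇v = 0; (ii) ∂ₜw + ∇⊥φ·∇w = ∂_{x₁}v ∂_{x₂}((x₁∂_{x₁}φ + x₂∂_{x₂}φ)/|ξ|²) − ∂_{x₂}v ∂_{x₁}((x₁∂_{x₁}φ + x₂∂_{x₂}φ)/|ξ|²)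 + 2v(x₂∂_{x₁}v − x₁∂_{x₂}v)/|ξ|⁴; and (iii) L_K φ = w + 2h²v/|ξ|⁴ + (x₁∂_{x₁}v + x₂∂_{x₂}v)/|ξ|², where ∇⊥φ = (∂_{x₂}φ, −∂_{x₁}φ) and |ξ|² = h² + x₁² + x₂². -/

import Mathlib

noncomputable section

open Real

/-- ℝ³ as functions `Fin 3 → ℝ`. -/
abbrev V3 := Fin 3 → ℝ

/-- ℝ² as functions `Fin 2 → ℝ`. -/
abbrev V2 := Fin 2 → ℝ

/-- Partial derivative `∂_{x_i} f` of a scalar function on ℝ³. -/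
def pd3 (i : Fin 3) (f : V3 → ℝ) (x : V3) : ℝ := fderiv ℝ f x (Pi.single i 1)

/-- Partial derivative `∂_{x_i} f` of a scalar function on ℝ². -/
def pd2 (i : Fin 2) (f : V2 → ℝ) (x : V2) : ℝ := fderiv ℝ f x (Pi.single i 1)

/-- Embedding of the cross-section plane: `(x₁,x₂) ↦ (x₁,x₂,0)`. -/
def emb (p : V2) : V3 := ![p 0, p 1, 0]

/-- The helical transformation `H_θ(x) = Q_θ x + (0,0,hθ)`. -/
def Hmap (h θ : ℝ) (x : V3) : V3 :=
  ![x 0 * Real.cos θ + x 1 * Real.sin θ,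
    -(x 0) * Real.sin θ + x 1 * Real.cos θ,
    x 2 + h * θ]

/-- The rotation `Q_θ = diag(R_θ, 1)` acting on vectors of ℝ³. -/
def Qrot (θ : ℝ) (v : V3) : V3 :=
  ![v 0 * Real.cos θ + v 1 * Real.sin θ,
    -(v 0) * Real.sin θ + v 1 * Real.cos θ,
    v 2]

/-- The vector field `ξ(x) = (x₂, −x₁, h)`. -/
def xiVec (h : ℝ) (x : V3) : V3 := ![x 1, -(x 0), h]

/-- `|ξ(x)|² = h² + x₁² + x₂²`. -/
def xiNormSq (h : ℝ) (x : V3) : ℝ := h ^ 2 + (x 0) ^ 2 + (x 1) ^ 2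

/-- The helical swirl `v_ξ = v ⋅ ξ`. -/
def swirl (h : ℝ) (v : V3 → V3) (x : V3) : ℝ := ∑ i : Fin 3, v x i * xiVec h x i

/-- The orthogonal part `u = v − v_ξ ξ / |ξ|²` of a vector field `v`. -/
def orthPart (h : ℝ) (v : V3 → V3) (x : V3) : V3 :=
  fun i => v x i - swirl h v x * xiVec h x i / xiNormSq h x

/-- Third component of the vorticity: `w₃ = ∂₁v₂ − ∂₂v₁`. -/
def w3 (v : V3 → V3) (x : V3) : ℝ :=
  pd3 0 (fun y => v y 1) x - pd3 1 (fun y => v y 0) x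

/-- The elliptic operator `L_K φ = −div(K ∇φ)` with
`K = (h²+|x|²)⁻¹ ((h²+x₂², −x₁x₂), (−x₁x₂, h²+x₁²))`. -/
def LK (h : ℝ) (φ : V2 → ℝ) (x : V2) : ℝ :=
  -(pd2 0 (fun y =>
      ((h ^ 2 + (y 1) ^ 2) * pd2 0 φ y - y 0 * y 1 * pd2 1 φ y) /
        (h ^ 2 + (y 0) ^ 2 + (y 1) ^ 2)) x
    + pd2 1 (fun y =>
      (-(y 0 * y 1) * pd2 0 φ y + (h ^ 2 + (y 0) ^ 2) * pd2 1 φ y) /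
        (h ^ 2 + (y 0) ^ 2 + (y 1) ^ 2)) x)

/-- `n` is an outward normal vector of `Ω` at the boundary point `x`. -/
def IsOutwardNormal (Ω : Set V3) (x n : V3) : Prop :=
  ∃ ε > (0 : ℝ), (∀ t ∈ Set.Ioo (0 : ℝ) ε, x + t • n ∉ closure Ω) ∧
    (∀ t ∈ Set.Ioo (0 : ℝ) ε, x - t • n ∈ Ω)

/-!
Helical symmetry `v ∘ H_θ = Q_θ v`, `P ∘ H_θ = P` differentiates at `θ = 0` to `ξ·∇v = Jv` and
`ξ·∇P = 0`, where `J` generates the rotations `Q_θ` and is also the derivative of `ξ`. Hence the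
swirl `v·ξ` and, after one more derivative and Schwarz's theorem, `w₃` are constant along `ξ`. For
such a function `f`, `v·∇f` only sees the horizontal field `v - (v₃/h)ξ`, which the stream-function
relation identifies with `∇⊥φ` on the cross-section.

Then (i) is `D_t(v·ξ) = -ξ·∇P + v·Jv = 0`; (ii) is the third component of the vorticity equation
`D_t ω = (ω·∇)v`, where helicity turns `(ω·∇)v₃` into `(∂₂v_ξ ∂₁v₃ - ∂₁v_ξ ∂₂v₃)/h` and
`(x₁∂₁φ + x₂∂₂φ)/|ξ|² = v_ξ/|ξ|² - v₃/h`; and (iii) holds because `K∇φ = (-u₂, u₁)`, so that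
`L_K φ = ∂₁u₂ - ∂₂u₁` is the third component of `∇ × u`.
-/

open Topology

section Calculus

variable {f g : V3 → ℝ} {x : V3}

theorem fderiv_apply_eq_sum_pd3 (f : V3 → ℝ) (x w : V3) :
    fderiv ℝ f x w = ∑ j : Fin 3, w j * pd3 j f x := by
  conv_lhs => rw [← Finset.univ_sum_single w]
  simp only [map_sum, pd3]
  refine Finset.sum_congr rfl fun j _ => ?_
  rw [← smul_eq_mul, ← map_smul]
  congr 1
  ext k
  simp [Pi.single_apply]

theorem pd3_of_hasFDerivAt {L : V3 →L[ℝ] ℝ} (h : HasFDerivAt f L x) (i : Fin 3) :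
    pd3 i f x = L (Pi.single i 1) := by
  rw [pd3, h.fderiv]

theorem Filter.EventuallyEq.pd3_eq (h : f =ᶠ[𝓝 x] g) (i : Fin 3) : pd3 i f x = pd3 i g x := by
  rw [pd3, pd3, h.fderiv_eq]

theorem Filter.EventuallyEq.pd2_eq {f g : V2 → ℝ} {p : V2} (h : f =ᶠ[𝓝 p] g) (i : Fin 2) :
    pd2 i f p = pd2 i g p := by
  rw [pd2, pd2, h.fderiv_eq]

theorem pd3_sub (hf : DifferentiableAt ℝ f x) (hg : DifferentiableAt ℝ g x) (i : Fin 3) :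
    pd3 i (fun y => f y - g y) x = pd3 i f x - pd3 i g x := by
  simp [pd3, fderiv_fun_sub hf hg]

theorem pd3_const (c : ℝ) (i : Fin 3) : pd3 i (fun _ => c) x = 0 := by
  simp [pd3]

theorem pd3_neg (i : Fin 3) : pd3 i (fun y => -f y) x = -pd3 i f x := by
  simp [pd3, fderiv_fun_neg]

theorem pd3_mul (hf : DifferentiableAt ℝ f x) (hg : DifferentiableAt ℝ g x) (i : Fin 3) :
    pd3 i (fun y => f y * g y) x = pd3 i f x * g x + f x * pd3 i g x := by
  simp [pd3, fderiv_fun_mul hf hg]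
  ring

theorem pd3_sum_mul {a b : Fin 3 → V3 → ℝ} (ha : ∀ j, DifferentiableAt ℝ (a j) x)
    (hb : ∀ j, DifferentiableAt ℝ (b j) x) (i : Fin 3) :
    pd3 i (fun y => ∑ j : Fin 3, a j y * b j y) x
      = ∑ j : Fin 3, (pd3 i (a j) x * b j x + a j x * pd3 i (b j) x) := by
  rw [pd3, fderiv_fun_sum fun j _ => (ha j).fun_mul (hb j), sum_apply]
  exact Finset.sum_congr rfl fun j _ => pd3_mul (ha j) (hb j) i

theorem pd3_inv (hg : DifferentiableAt ℝ g x) (hg0 : g x ≠ 0) (i : Fin 3) :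
    pd3 i (fun y => (g y)⁻¹) x = -pd3 i g x / g x ^ 2 := by
  rw [show (fun y => (g y)⁻¹) = (·⁻¹) ∘ g from rfl,
    pd3_of_hasFDerivAt ((hasDerivAt_inv hg0).comp_hasFDerivAt x hg.hasFDerivAt)]
  simp [pd3, div_eq_mul_inv, mul_comm]

theorem pd3_div (hf : DifferentiableAt ℝ f x) (hg : DifferentiableAt ℝ g x) (hg0 : g x ≠ 0)
    (i : Fin 3) :
    pd3 i (fun y => f y / g y) x = (pd3 i f x * g x - f x * pd3 i g x) / g x ^ 2 := by
  simp only [div_eq_mul_inv]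
  rw [pd3_mul (g := fun y => (g y)⁻¹) hf (hg.inv hg0), pd3_inv hg hg0]
  field_simp
  ring

end Calculus

theorem continuous_emb : Continuous emb :=
  continuous_pi fun i => by fin_cases i <;> simp [emb] <;> fun_prop

theorem emb_apply_zero (p : V2) : emb p 0 = p 0 := rfl

theorem emb_apply_one (p : V2) : emb p 1 = p 1 := rfl

theorem xiNormSq_emb (h : ℝ) (p : V2) : xiNormSq h (emb p) = h ^ 2 + p 0 ^ 2 + p 1 ^ 2 := rfl

theorem pd2_comp_emb {f : V3 → ℝ} {p : V2} (hf : DifferentiableAt ℝ f (emb p)) (i : Fin 2) :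
    pd2 i (fun q => f (emb q)) p = pd3 i.castSucc f (emb p) := by
  let E : V2 →L[ℝ] V3 := LinearMap.toContinuousLinearMap
    { toFun := emb
      map_add' := fun p q => by ext j; fin_cases j <;> simp [emb]
      map_smul' := fun c p => by ext j; fin_cases j <;> simp [emb] }
  have hE : emb (Pi.single i 1) = Pi.single i.castSucc 1 := by
    ext j; fin_cases i <;> fin_cases j <;> simp [emb]
  rw [pd2, pd3, show (fun q => f (emb q)) = f ∘ E from rfl,
    fderiv_comp (g := f) (f := ⇑E) p hf E.differentiableAt, E.fderiv]
  simp only [ContinuousLinearMap.coe_comp, Function.comp_apply]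
  exact congrArg _ hE

/-- The generator `J` of the rotations `Q_θ`, which is also the derivative of `ξ`. -/
def rotGen : V3 →L[ℝ] V3 := LinearMap.toContinuousLinearMap
  { toFun := fun w => ![w 1, -w 0, 0]
    map_add' := fun v w => by ext j; fin_cases j <;> simp; ring
    map_smul' := fun c w => by ext j; fin_cases j <;> simp }

theorem rotGen_apply (w : V3) : rotGen w = ![w 1, -w 0, 0] := rfl

theorem hasDerivAt_Qrot (w : V3) : HasDerivAt (fun θ => Qrot θ w) (rotGen w) 0 := by
  rw [hasDerivAt_pi]
  intro i
  fin_cases i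
  · simpa [Qrot, rotGen_apply] using
      ((hasDerivAt_cos 0).const_mul (w 0)).fun_add ((hasDerivAt_sin 0).const_mul (w 1))
  · simpa [Qrot, rotGen_apply] using
      ((hasDerivAt_sin 0).const_mul (-w 0)).fun_add ((hasDerivAt_cos 0).const_mul (w 1))
  · simpa [Qrot, rotGen_apply] using hasDerivAt_const (0 : ℝ) (w 2)

theorem hasDerivAt_Hmap (h : ℝ) (y : V3) : HasDerivAt (fun θ => Hmap h θ y) (xiVec h y) 0 := by
  rw [hasDerivAt_pi]
  intro i
  fin_cases i
  · simpa [Hmap, xiVec] using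
      ((hasDerivAt_cos 0).const_mul (y 0)).fun_add ((hasDerivAt_sin 0).const_mul (y 1))
  · simpa [Hmap, xiVec] using
      ((hasDerivAt_sin 0).const_mul (-y 0)).fun_add ((hasDerivAt_cos 0).const_mul (y 1))
  · simpa [Hmap, xiVec] using ((hasDerivAt_id (0 : ℝ)).const_mul h).const_add (y 2)

theorem Hmap_zero (h : ℝ) (y : V3) : Hmap h 0 y = y := by
  ext i; fin_cases i <;> simp [Hmap]

theorem hasFDerivAt_xiVec (h : ℝ) (y : V3) : HasFDerivAt (xiVec h) rotGen y := by
  have : xiVec h = fun z => rotGen z + ![0, 0, h] := by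
    ext z i; fin_cases i <;> simp [xiVec, rotGen_apply]
  rw [this]
  exact rotGen.hasFDerivAt.add_const _

theorem fderiv_xiVec_eq_of_comp_Hmap {h g' : ℝ} {f : V3 → ℝ} {g : ℝ → ℝ} {y : V3}
    (hf : DifferentiableAt ℝ f y) (hfg : ∀ θ, f (Hmap h θ y) = g θ)
    (hg : HasDerivAt g g' 0) :
    fderiv ℝ f y (xiVec h y) = g' := by
  rw [← Hmap_zero h y] at hf
  have := hf.hasFDerivAt.comp_hasDerivAt (0 : ℝ) (hasDerivAt_Hmap h y)
  rw [Hmap_zero] at this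
  exact this.unique (by simpa only [Function.comp_def, hfg] using hg)

theorem fderiv_xiVec_of_helical {h : ℝ} {u : V3 → V3} {P : V3 → ℝ} {z : V3}
    (hhel : ∀ θ, u (Hmap h θ z) = Qrot θ (u z) ∧ P (Hmap h θ z) = P z)
    (hu : ∀ i, DifferentiableAt ℝ (fun x => u x i) z) (hP : DifferentiableAt ℝ P z) :
    (∀ i, fderiv ℝ (fun x => u x i) z (xiVec h z) = rotGen (u z) i)
      ∧ fderiv ℝ P z (xiVec h z) = 0 :=
  ⟨fun i => fderiv_xiVec_eq_of_comp_Hmap (hu i) (fun θ => congrFun (hhel θ).1 i)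
      (hasDerivAt_pi.1 (hasDerivAt_Qrot (u z)) i),
    fderiv_xiVec_eq_of_comp_Hmap hP (fun θ => (hhel θ).2) (hasDerivAt_const 0 (P z))⟩

section TwiceDifferentiable

variable {E : Type*} [NormedAddCommGroup E] [NormedSpace ℝ E] {f : E → ℝ} {x : E}

theorem ContDiffAt.eventually_differentiableAt (hf : ContDiffAt ℝ 2 f x) :
    ∀ᶠ y in 𝓝 x, DifferentiableAt ℝ f y :=
  (hf.eventually (by simp)).mono fun _ hy => hy.differentiableAt two_ne_zero

theorem ContDiffAt.differentiableAt_fderiv (hf : ContDiffAt ℝ 2 f x) :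
    DifferentiableAt ℝ (fderiv ℝ f) x :=
  (hf.fderiv_right (m := 1) (by norm_num)).differentiableAt one_ne_zero

end TwiceDifferentiable

section SecondDerivatives

variable {f : V3 → ℝ} {x : V3}

theorem fderiv_eq_sum_pd3_smul_proj (f : V3 → ℝ) :
    fderiv ℝ f = fun y => ∑ j : Fin 3, pd3 j f y • ContinuousLinearMap.proj j := by
  ext y w
  simp [fderiv_apply_eq_sum_pd3, mul_comm]

theorem differentiableAt_fderiv_of_pd3 (h : ∀ j, DifferentiableAt ℝ (pd3 j f) x) :
    DifferentiableAt ℝ (fderiv ℝ f) x := by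
  rw [fderiv_eq_sum_pd3_smul_proj]
  exact DifferentiableAt.fun_sum fun j _ => (h j).smul_const _

theorem fderiv_fderiv_apply (h : DifferentiableAt ℝ (fderiv ℝ f) x) (v w : V3) :
    fderiv ℝ (fun y => fderiv ℝ f y v) x w = fderiv ℝ (fderiv ℝ f) x w v := by
  simp [fderiv_clm_apply h (differentiableAt_const _)]

theorem pd3_pd3_eq (h : DifferentiableAt ℝ (fderiv ℝ f) x) (j k : Fin 3) :
    pd3 k (pd3 j f) x = fderiv ℝ (fderiv ℝ f) x (Pi.single k 1) (Pi.single j 1) :=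
  fderiv_fderiv_apply h _ _

theorem pd3_pd3_comm (hf : ∀ᶠ y in 𝓝 x, DifferentiableAt ℝ f y)
    (h : ∀ j, DifferentiableAt ℝ (pd3 j f) x) (j k : Fin 3) :
    pd3 k (pd3 j f) x = pd3 j (pd3 k f) x := by
  have h' := differentiableAt_fderiv_of_pd3 h
  rw [pd3_pd3_eq h', pd3_pd3_eq h']
  exact second_derivative_symmetric_of_eventually (hf.mono fun y hy => hy.hasFDerivAt)
    h'.hasFDerivAt _ _

theorem ContDiffAt.differentiableAt_pd3 (hf : ContDiffAt ℝ 2 f x) (j : Fin 3) :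
    DifferentiableAt ℝ (pd3 j f) x :=
  hf.differentiableAt_fderiv.clm_apply (differentiableAt_const _)

theorem ContDiffAt.pd3_pd3_comm (hf : ContDiffAt ℝ 2 f x) (j k : Fin 3) :
    pd3 k (pd3 j f) x = pd3 j (pd3 k f) x :=
  _root_.pd3_pd3_comm hf.eventually_differentiableAt hf.differentiableAt_pd3 j k

theorem ContDiffAt.fderiv_pd3_xiVec (h : ℝ) (hf : ContDiffAt ℝ 2 f x) (k : Fin 3) :
    fderiv ℝ (pd3 k f) x (xiVec h x)
      = pd3 k (fun y => fderiv ℝ f y (xiVec h y)) x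
        - fderiv ℝ f x (rotGen (Pi.single k 1)) := by
  have hd := hf.differentiableAt_fderiv
  have hξ := hd.hasFDerivAt.clm_apply (hasFDerivAt_xiVec h x)
  rw [pd3_of_hasFDerivAt hξ, show pd3 k f = fun y => fderiv ℝ f y (Pi.single k 1) from rfl,
    fderiv_fderiv_apply hd, second_derivative_symmetric_of_eventually
    (hf.eventually_differentiableAt.mono fun y hy => hy.hasFDerivAt) hd.hasFDerivAt]
  simp

end SecondDerivatives

section SpaceTime

variable {E : Type*} [NormedAddCommGroup E] [NormedSpace ℝ E]
  {F : ℝ × E → ℝ} {t : ℝ} {x : E}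

theorem ContDiffAt.space_slice {n : WithTop ℕ∞} (hF : ContDiffAt ℝ n F (t, x)) :
    ContDiffAt ℝ n (fun z => F (t, z)) x :=
  hF.comp x (contDiffAt_const.prodMk contDiffAt_id)

theorem ContDiffOn.contDiffAt_space_slice {n : WithTop ℕ∞} {I : Set ℝ} {U : Set E}
    (hF : ContDiffOn ℝ n F (I ×ˢ U)) (hI : IsOpen I) (hU : IsOpen U) (ht : t ∈ I)
    (hx : x ∈ U) :
    ContDiffAt ℝ n (fun z => F (t, z)) x :=
  (hF.contDiffAt ((hI.prod hU).mem_nhds ⟨ht, hx⟩)).space_slice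

theorem hasDerivAt_time_slice (hF : DifferentiableAt ℝ F (t, x)) :
    HasDerivAt (fun s => F (s, x)) (fderiv ℝ F (t, x) (1, 0)) t :=
  hF.hasFDerivAt.comp_hasDerivAt t ((hasDerivAt_id t).prodMk (hasDerivAt_const t x))

theorem fderiv_space_slice (hF : DifferentiableAt ℝ F (t, x)) (e : E) :
    fderiv ℝ (fun z => F (t, z)) x e = fderiv ℝ F (t, x) (0, e) := by
  have := hF.hasFDerivAt.comp x ((hasFDerivAt_const t x).prodMk (hasFDerivAt_id x))
  rw [show (fun z => F (t, z)) = F ∘ fun z => (t, z) from rfl, this.fderiv]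
  simp

theorem eventuallyEq_deriv_time_slice (hF : ∀ᶠ q in 𝓝 (t, x), DifferentiableAt ℝ F q) :
    (fun z => deriv (fun s => F (s, z)) t) =ᶠ[𝓝 x] fun z => fderiv ℝ F (t, z) (1, 0) :=
  ((continuous_const.prodMk continuous_id).continuousAt.eventually hF).mono
    fun _ hz => (hasDerivAt_time_slice hz).deriv

theorem ContDiffAt.differentiableAt_deriv_time_slice (hF : ContDiffAt ℝ 2 F (t, x)) :
    DifferentiableAt ℝ (fun z => deriv (fun s => F (s, z)) t) x := by
  refine DifferentiableAt.congr_of_eventuallyEq ?_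
    (eventuallyEq_deriv_time_slice hF.eventually_differentiableAt)
  exact (hF.differentiableAt_fderiv.clm_apply (differentiableAt_const _)).comp x
    ((differentiableAt_const t).prodMk differentiableAt_id)

theorem ContDiffAt.hasDerivAt_fderiv_space_slice (hF : ContDiffAt ℝ 2 F (t, x)) (e : E) :
    HasDerivAt (fun s => fderiv ℝ (fun z => F (s, z)) x e)
      (fderiv ℝ (fun z => deriv (fun s => F (s, z)) t) x e) t := by
  have hev := hF.eventually_differentiableAt
  have hd := hF.differentiableAt_fderiv
  have hspace : (fun s => fderiv ℝ (fun z => F (s, z)) x e)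
      =ᶠ[𝓝 t] fun s => fderiv ℝ F (s, x) (0, e) :=
    ((continuous_id.prodMk continuous_const).continuousAt.eventually hev).mono
      fun s hs => fderiv_space_slice hs e
  have htime := eventuallyEq_deriv_time_slice hev
  have hsymm := second_derivative_symmetric_of_eventually (hev.mono fun _ hq => hq.hasFDerivAt)
    hd.hasFDerivAt (1, 0) (0, e)
  have hz := (hd.hasFDerivAt.clm_apply (hasFDerivAt_const ((1 : ℝ), (0 : E)) (t, x))).comp x
    ((hasFDerivAt_const t x).prodMk (hasFDerivAt_id x))
  have hs := (hd.hasFDerivAt.clm_apply (hasFDerivAt_const ((0 : ℝ), e) (t, x))).comp_hasDerivAt t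
    ((hasDerivAt_id t).prodMk (hasDerivAt_const t x))
  rw [htime.fderiv_eq, show (fun z => fderiv ℝ F (t, z) (1, 0))
    = (fun q => fderiv ℝ F q (1, 0)) ∘ fun z => (t, z) from rfl, hz.fderiv]
  refine (hs.congr_of_eventuallyEq hspace).congr_deriv ?_
  simpa using hsymm

end SpaceTime

section Swirl

variable {h : ℝ} {u : V3 → V3} {y : V3}

theorem swirl_apply (h : ℝ) (u : V3 → V3) (y : V3) :
    swirl h u y = y 1 * u y 0 - y 0 * u y 1 + h * u y 2 := by
  simp [swirl, Fin.sum_univ_three, xiVec]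
  ring

theorem fderiv_swirl_apply (hu : ∀ i, DifferentiableAt ℝ (fun z => u z i) y) (e : V3) :
    fderiv ℝ (swirl h u) y e
      = ∑ i : Fin 3, (fderiv ℝ (fun z => u z i) y e * xiVec h y i + u y i * rotGen e i) := by
  have hξ := hasFDerivAt_pi'.1 (hasFDerivAt_xiVec h y)
  have := HasFDerivAt.fun_sum (u := Finset.univ) fun i _ => (hu i).hasFDerivAt.fun_mul (hξ i)
  rw [show swirl h u = fun z => ∑ i : Fin 3, u z i * xiVec h z i from rfl, this.fderiv]
  simp only [mul_comm (fderiv ℝ _ y e)]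
  simp [add_comm]

theorem pd3_zero_swirl (hu : ∀ i, DifferentiableAt ℝ (fun z => u z i) y) :
    pd3 0 (swirl h u) y = y 1 * pd3 0 (fun z => u z 0) y - y 0 * pd3 0 (fun z => u z 1) y
      + h * pd3 0 (fun z => u z 2) y - u y 1 := by
  rw [pd3, fderiv_swirl_apply hu]
  simp [Fin.sum_univ_three, xiVec, rotGen_apply, pd3]
  ring

theorem pd3_one_swirl (hu : ∀ i, DifferentiableAt ℝ (fun z => u z i) y) :
    pd3 1 (swirl h u) y = y 1 * pd3 1 (fun z => u z 0) y - y 0 * pd3 1 (fun z => u z 1) y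
      + h * pd3 1 (fun z => u z 2) y + u y 0 := by
  rw [pd3, fderiv_swirl_apply hu]
  simp [Fin.sum_univ_three, xiVec, rotGen_apply, pd3]
  ring

theorem differentiableAt_swirl (hu : ∀ i, DifferentiableAt ℝ (fun z => u z i) y) :
    DifferentiableAt ℝ (swirl h u) y := by
  rw [show swirl h u = fun z => z 1 * u z 0 - z 0 * u z 1 + h * u z 2 from
    funext (swirl_apply h u)]
  fun_prop

theorem fderiv_swirl_xiVec (hu : ∀ i, DifferentiableAt ℝ (fun z => u z i) y)
    (hhel : ∀ i, fderiv ℝ (fun z => u z i) y (xiVec h y) = rotGen (u y) i) :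
    fderiv ℝ (swirl h u) y (xiVec h y) = 0 := by
  rw [fderiv_swirl_apply hu]
  simp only [Fin.sum_univ_three, hhel]
  simp [xiVec, rotGen_apply]

end Swirl

theorem fderiv_apply_eq_of_fderiv_xiVec_eq_zero {h : ℝ} {f : V3 → ℝ} {y : V3} (hh : h ≠ 0)
    (hf : fderiv ℝ f y (xiVec h y) = 0) (w : V3) :
    fderiv ℝ f y w = (w 0 - y 1 * w 2 / h) * pd3 0 f y + (w 1 + y 0 * w 2 / h) * pd3 1 f y := by
  rw [fderiv_apply_eq_sum_pd3] at hf ⊢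
  simp only [Fin.sum_univ_three, xiVec] at hf ⊢
  simp at hf
  field_simp
  linear_combination w 2 * hf

section OrthogonalPart

variable {h : ℝ} {u : V3 → V3} {y : V3}

theorem xiNormSq_pos (hh : h ≠ 0) (y : V3) : 0 < xiNormSq h y := by
  unfold xiNormSq; positivity

theorem pd3_xiVec (h : ℝ) (y : V3) (i j : Fin 3) :
    pd3 j (fun z => xiVec h z i) y = rotGen (Pi.single j 1) i :=
  pd3_of_hasFDerivAt (hasFDerivAt_pi'.1 (hasFDerivAt_xiVec h y) i) j

theorem pd3_xiNormSq (h : ℝ) (y : V3) (j : Fin 3) :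
    pd3 j (xiNormSq h) y = 2 * (y 0 * (Pi.single j 1 : V3) 0 + y 1 * (Pi.single j 1 : V3) 1) := by
  have h0 : HasFDerivAt (fun z : V3 => z 0) (ContinuousLinearMap.proj (R := ℝ) 0) y :=
    hasFDerivAt_apply 0 y
  have h1 : HasFDerivAt (fun z : V3 => z 1) (ContinuousLinearMap.proj (R := ℝ) 1) y :=
    hasFDerivAt_apply 1 y
  have := ((h0.pow 2).const_add (h ^ 2)).fun_add (h1.pow 2)
  rw [show xiNormSq h = fun z => h ^ 2 + z 0 ^ 2 + z 1 ^ 2 from rfl, pd3_of_hasFDerivAt this]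
  simp
  ring

theorem differentiableAt_xiNormSq (h : ℝ) (y : V3) : DifferentiableAt ℝ (xiNormSq h) y := by
  unfold xiNormSq; fun_prop

theorem differentiableAt_orthPart (hh : h ≠ 0)
    (hu : ∀ i, DifferentiableAt ℝ (fun z => u z i) y)
    (i : Fin 3) : DifferentiableAt ℝ (fun z => orthPart h u z i) y := by
  have hS := differentiableAt_swirl (h := h) hu
  have hN0 := (xiNormSq_pos hh y).ne'
  have hN := differentiableAt_xiNormSq h y
  have hξ := (hasFDerivAt_pi'.1 (hasFDerivAt_xiVec h y) i).differentiableAt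
  unfold orthPart
  fun_prop (disch := exact hN0)

theorem w3_orthPart (hh : h ≠ 0) (hu : ∀ i, DifferentiableAt ℝ (fun z => u z i) y) :
    w3 (orthPart h u) y = w3 u y + 2 * h ^ 2 * swirl h u y / xiNormSq h y ^ 2
        + (y 0 * pd3 0 (swirl h u) y + y 1 * pd3 1 (swirl h u) y) / xiNormSq h y := by
  have hS := differentiableAt_swirl (h := h) hu
  have hN := differentiableAt_xiNormSq h y
  have hN0 := (xiNormSq_pos hh y).ne'
  have hξ : ∀ i, DifferentiableAt ℝ (fun z => xiVec h z i) y :=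
    fun i => (hasFDerivAt_pi'.1 (hasFDerivAt_xiVec h y) i).differentiableAt
  have hq : ∀ i, DifferentiableAt ℝ (fun z => swirl h u z * xiVec h z i / xiNormSq h z) y := by
    fun_prop (disch := exact hN0)
  unfold w3 orthPart
  rw [pd3_sub (hu 1) (hq 1), pd3_sub (hu 0) (hq 0), pd3_div (hS.fun_mul (hξ 1)) hN hN0,
    pd3_div (hS.fun_mul (hξ 0)) hN hN0, pd3_mul hS (hξ 1), pd3_mul hS (hξ 0), pd3_xiVec,
    pd3_xiVec, pd3_xiNormSq, pd3_xiNormSq]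
  simp [xiVec, xiNormSq, rotGen_apply]
  field_simp
  ring

end OrthogonalPart

section StreamFunction

def IsStreamFunctionAt (h : ℝ) (u : V3 → V3) (φ : V2 → ℝ) (p : V2) : Prop :=
  orthPart h u (emb p) 0 =
      (-(p 0 * p 1) * pd2 0 φ p + (h ^ 2 + (p 0) ^ 2) * pd2 1 φ p) /
        (h ^ 2 + (p 0) ^ 2 + (p 1) ^ 2) ∧
    orthPart h u (emb p) 1 =
      (-(h ^ 2 + (p 1) ^ 2) * pd2 0 φ p + p 0 * p 1 * pd2 1 φ p) /
        (h ^ 2 + (p 0) ^ 2 + (p 1) ^ 2)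

variable {h : ℝ} {u : V3 → V3} {φ : V2 → ℝ} {p : V2}

theorem IsStreamFunctionAt.pd2_eq (hh : h ≠ 0) (hφ : IsStreamFunctionAt h u φ p) :
    pd2 0 φ p = -(u (emb p) 1 + p 0 * u (emb p) 2 / h) ∧
      pd2 1 φ p = u (emb p) 0 - p 1 * u (emb p) 2 / h := by
  obtain ⟨h0, h1⟩ := hφ
  have hN : h ^ 2 + p 0 ^ 2 + p 1 ^ 2 ≠ 0 := by positivity
  simp only [orthPart, swirl_apply, xiVec, xiNormSq, emb, Matrix.cons_val_zero,
    Matrix.cons_val_one] at h0 h1 ⊢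
  field_simp at h0 h1
  constructor
  · field_simp
    refine mul_right_cancel₀ (mul_ne_zero hh hN) ?_
    linear_combination (-(p 0 * p 1)) * h0 + (h ^ 2 + p 0 ^ 2) * h1
  · field_simp
    refine mul_right_cancel₀ (mul_ne_zero hh hN) ?_
    linear_combination (-(h ^ 2 + p 1 ^ 2)) * h0 + p 0 * p 1 * h1

/-- `u - (u₃/h) ξ` is horizontal and equals `∇⊥φ`, while `ξ·∇f = 0`. -/
theorem IsStreamFunctionAt.transport_eq (hh : h ≠ 0) (hφ : IsStreamFunctionAt h u φ p)
    {f : V3 → ℝ} (hf : DifferentiableAt ℝ f (emb p))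
    (hξf : fderiv ℝ f (emb p) (xiVec h (emb p)) = 0) :
    pd2 1 φ p * pd2 0 (fun q => f (emb q)) p - pd2 0 φ p * pd2 1 (fun q => f (emb q)) p
      = fderiv ℝ f (emb p) (u (emb p)) := by
  obtain ⟨h0, h1⟩ := hφ.pd2_eq hh
  rw [h0, h1, pd2_comp_emb hf, pd2_comp_emb hf,
    fderiv_apply_eq_of_fderiv_xiVec_eq_zero hh hξf, emb_apply_zero, emb_apply_one,
    Fin.castSucc_zero, Fin.castSucc_one]
  ring

theorem IsStreamFunctionAt.radial_eq (hh : h ≠ 0) (hφ : IsStreamFunctionAt h u φ p) :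
    (p 0 * pd2 0 φ p + p 1 * pd2 1 φ p) / (h ^ 2 + p 0 ^ 2 + p 1 ^ 2)
      = swirl h u (emb p) / xiNormSq h (emb p) - u (emb p) 2 / h := by
  obtain ⟨h0, h1⟩ := hφ.pd2_eq hh
  have hN : h ^ 2 + p 0 ^ 2 + p 1 ^ 2 ≠ 0 := by positivity
  rw [h0, h1, swirl_apply, xiNormSq_emb, emb_apply_zero, emb_apply_one]
  field_simp
  ring

theorem pd2_radial_of_isStreamFunctionAt (hh : h ≠ 0)
    (hu : ∀ i, DifferentiableAt ℝ (fun z => u z i) (emb p))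
    (hφ : ∀ᶠ q in 𝓝 p, IsStreamFunctionAt h u φ q) (j : Fin 2) :
    pd2 j (fun q => (q 0 * pd2 0 φ q + q 1 * pd2 1 φ q) / (h ^ 2 + q 0 ^ 2 + q 1 ^ 2)) p
      = pd3 j.castSucc (swirl h u) (emb p) / xiNormSq h (emb p)
        - 2 * p j * swirl h u (emb p) / xiNormSq h (emb p) ^ 2
        - pd3 j.castSucc (fun z => u z 2) (emb p) / h := by
  have hS := differentiableAt_swirl (h := h) hu
  have hN := differentiableAt_xiNormSq h (emb p)
  have hN0 := (xiNormSq_pos hh (emb p)).ne'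
  have hq : DifferentiableAt ℝ (fun z => swirl h u z / xiNormSq h z) (emb p) := by
    fun_prop (disch := assumption)
  have hu2 : DifferentiableAt ℝ (fun z => u z 2 / h) (emb p) := by
    fun_prop (disch := assumption)
  have hΨ : (fun q : V2 => (q 0 * pd2 0 φ q + q 1 * pd2 1 φ q) / (h ^ 2 + q 0 ^ 2 + q 1 ^ 2))
      =ᶠ[𝓝 p] fun q => (fun z => swirl h u z / xiNormSq h z - u z 2 / h) (emb q) :=
    hφ.mono fun q hq => hq.radial_eq hh
  rw [hΨ.pd2_eq, pd2_comp_emb (hq.fun_sub hu2), pd3_sub hq hu2, pd3_div hS hN hN0,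
    pd3_div (hu 2) (differentiableAt_const h) hh, pd3_xiNormSq, pd3_const, xiNormSq_emb]
  fin_cases j <;> simp [emb_apply_zero, emb_apply_one] <;> field_simp

theorem LK_eq_w3_orthPart (hh : h ≠ 0) (hu : ∀ i, DifferentiableAt ℝ (fun z => u z i) (emb p))
    (hφ : ∀ᶠ q in 𝓝 p, IsStreamFunctionAt h u φ q) :
    LK h φ p = w3 (orthPart h u) (emb p) := by
  have hK0 : (fun q : V2 => ((h ^ 2 + q 1 ^ 2) * pd2 0 φ q - q 0 * q 1 * pd2 1 φ q)
      / (h ^ 2 + q 0 ^ 2 + q 1 ^ 2)) =ᶠ[𝓝 p] fun q => -orthPart h u (emb q) 1 := by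
    filter_upwards [hφ] with q hq
    rw [hq.2]
    ring
  have hK1 : (fun q : V2 => (-(q 0 * q 1) * pd2 0 φ q + (h ^ 2 + q 0 ^ 2) * pd2 1 φ q)
      / (h ^ 2 + q 0 ^ 2 + q 1 ^ 2)) =ᶠ[𝓝 p] fun q => orthPart h u (emb q) 0 := by
    filter_upwards [hφ] with q hq
    rw [hq.1]
  have hd := differentiableAt_orthPart hh hu
  rw [LK, hK0.pd2_eq, hK1.pd2_eq, pd2_comp_emb (hd 1).fun_neg, pd2_comp_emb (hd 0), pd3_neg]
  simp only [Fin.castSucc_zero, Fin.castSucc_one, w3]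
  ring

end StreamFunction

def curl (u : V3 → V3) (y : V3) : V3 :=
  ![pd3 1 (fun z => u z 2) y - pd3 2 (fun z => u z 1) y,
    pd3 2 (fun z => u z 0) y - pd3 0 (fun z => u z 2) y,
    w3 u y]

section Helical

variable {h : ℝ} {u : V3 → V3} {y : V3}

theorem fderiv_w3_xiVec (hu : ∀ i, ContDiffAt ℝ 2 (fun z => u z i) y)
    (hhel : ∀ᶠ z in 𝓝 y, ∀ i, fderiv ℝ (fun x => u x i) z (xiVec h z) = rotGen (u z) i) :
    fderiv ℝ (w3 u) y (xiVec h y) = 0 := by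
  have hcomm : ∀ i k, fderiv ℝ (pd3 k fun z => u z i) y (xiVec h y)
      = pd3 k (fun z => rotGen (u z) i) y
        - fderiv ℝ (fun z => u z i) y (rotGen (Pi.single k 1)) :=
    fun i k => by
      rw [(hu i).fderiv_pd3_xiVec h k, Filter.EventuallyEq.pd3_eq (hhel.mono fun z hz => hz i)]
  rw [show w3 u = fun z => pd3 0 (fun x => u x 1) z - pd3 1 (fun x => u x 0) z from rfl,
    fderiv_fun_sub ((hu 1).differentiableAt_pd3 0) ((hu 0).differentiableAt_pd3 1)]
  simp only [sub_apply, hcomm, rotGen_apply]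
  simp [pd3_neg, fderiv_apply_eq_sum_pd3, Fin.sum_univ_three]
  ring

theorem fderiv_curl_of_helical (hh : h ≠ 0) (hu : ∀ i, DifferentiableAt ℝ (fun z => u z i) y)
    (hhel : ∀ i, fderiv ℝ (fun z => u z i) y (xiVec h y) = rotGen (u y) i) :
    fderiv ℝ (fun z => u z 2) y (curl u y)
      = (pd3 1 (swirl h u) y * pd3 0 (fun z => u z 2) y
        - pd3 0 (swirl h u) y * pd3 1 (fun z => u z 2) y) / h := by
  have hpd3_two : ∀ i, pd3 2 (fun z => u z i) y = (rotGen (u y) i - y 1 * pd3 0 (fun z => u z i) y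
      + y 0 * pd3 1 (fun z => u z i) y) / h := fun i => by
    have := hhel i
    rw [fderiv_apply_eq_sum_pd3, Fin.sum_univ_three] at this
    simp only [xiVec] at this
    simp at this
    field_simp
    linear_combination this
  rw [fderiv_apply_eq_sum_pd3, pd3_zero_swirl hu, pd3_one_swirl hu, Fin.sum_univ_three]
  simp only [curl, w3, hpd3_two, rotGen_apply]
  simp
  field_simp
  ring

end Helical

section Euler

variable {v : ℝ → V3 → V3} {P : V3 → ℝ} {t : ℝ} {y : V3}

/-- `D_t(v·ξ) = -∇P·ξ + v·(v·∇)ξ`, and `v·(v·∇)ξ = v·Jv = 0`. -/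
theorem swirl_material_derivative (h : ℝ) (hvt : ∀ i, DifferentiableAt ℝ (fun s => v s y i) t)
    (hvx : ∀ i, DifferentiableAt ℝ (fun z => v t z i) y)
    (heuler : ∀ i, deriv (fun s => v s y i) t
      + ∑ j : Fin 3, v t y j * pd3 j (fun z => v t z i) y = -pd3 i P y) :
    deriv (fun s => swirl h (v s) y) t + fderiv ℝ (swirl h (v t)) y (v t y)
      = -fderiv ℝ P y (xiVec h y) := by
  have hdt : deriv (fun s => swirl h (v s) y) t
      = ∑ i : Fin 3, deriv (fun s => v s y i) t * xiVec h y i := by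
    rw [show (fun s => swirl h (v s) y) = fun s => ∑ i : Fin 3, v s y i * xiVec h y i from rfl,
      deriv_fun_sum fun i _ => (hvt i).mul_const _]
    simp
  rw [hdt, fderiv_swirl_apply hvx, fderiv_apply_eq_sum_pd3 P, ← Finset.sum_add_distrib]
  simp only [fderiv_apply_eq_sum_pd3 (fun z => v t z _), rotGen_apply]
  simp only [Fin.sum_univ_three] at heuler ⊢
  simp
  linear_combination xiVec h y 0 * heuler 0 + xiVec h y 1 * heuler 1 + xiVec h y 2 * heuler 2

end Euler

section Vorticity

variable {v : ℝ → V3 → V3} {P : V3 → ℝ} {t : ℝ} {y : V3}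

/-- The pressure drops out by the symmetry of its second derivatives, which exist because the
Euler equations express `∇P` through `C¹` quantities. -/
theorem w3_material_derivative
    (hv : ∀ i, ContDiffAt ℝ 2 (fun q : ℝ × V3 => v q.1 q.2 i) (t, y))
    (hP : ∀ᶠ z in 𝓝 y, DifferentiableAt ℝ P z)
    (heuler : ∀ᶠ z in 𝓝 y, ∀ i, deriv (fun s => v s z i) t
      + ∑ j : Fin 3, v t z j * pd3 j (fun x => v t x i) z = -pd3 i P z)
    (hdiv : ∑ i : Fin 3, pd3 i (fun z => v t z i) y = 0) :
    deriv (fun s => w3 (v s) y) t + fderiv ℝ (w3 (v t)) y (v t y)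
      = fderiv ℝ (fun z => v t z 2) y (curl (v t) y) := by
  set a : Fin 3 → V3 → ℝ := fun i z => deriv (fun s => v s z i) t
  set adv : Fin 3 → V3 → ℝ := fun i z => ∑ j : Fin 3, v t z j * pd3 j (fun x => v t x i) z
  have hux : ∀ i, ContDiffAt ℝ 2 (fun z => v t z i) y :=
    fun i => (hv i).space_slice
  have hdt : ∀ i k, HasDerivAt (fun s => pd3 k (fun z => v s z i) y) (pd3 k (a i) y) t :=
    fun i k => (hv i).hasDerivAt_fderiv_space_slice (Pi.single k 1)
  have ha : ∀ i, DifferentiableAt ℝ (a i) y := fun i => (hv i).differentiableAt_deriv_time_slice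
  have hadv : ∀ i k, pd3 k (adv i) y = ∑ j : Fin 3, (pd3 k (fun z => v t z j) y
      * pd3 j (fun x => v t x i) y + v t y j * pd3 j (pd3 k fun x => v t x i) y) := fun i k => by
    rw [pd3_sum_mul (fun j => (hux j).differentiableAt two_ne_zero)
      (fun j => (hux i).differentiableAt_pd3 j)]
    simp only [(hux i).pd3_pd3_comm]
  have hadvd : ∀ i, DifferentiableAt ℝ (adv i) y := fun i =>
    DifferentiableAt.fun_sum fun j _ =>
      ((hux j).differentiableAt two_ne_zero).mul ((hux i).differentiableAt_pd3 j)
  have hPeq : ∀ i, pd3 i P =ᶠ[𝓝 y] fun z => -a i z - adv i z := fun i =>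
    heuler.mono fun z hz => by linear_combination hz i
  have hPd : ∀ i, DifferentiableAt ℝ (pd3 i P) y := fun i =>
    ((ha i).neg.sub (hadvd i)).congr_of_eventuallyEq (hPeq i)
  have ha_eq : ∀ i k, pd3 k (a i) y = -pd3 k (pd3 i P) y - pd3 k (adv i) y := fun i k => by
    have : a i =ᶠ[𝓝 y] fun z => -pd3 i P z - adv i z :=
      heuler.mono fun z hz => by linear_combination hz i
    rw [this.pd3_eq, pd3_sub (hPd i).fun_neg (hadvd i), pd3_neg]
  have hPsymm := pd3_pd3_comm hP hPd 1 0
  rw [show deriv (fun s => w3 (v s) y) t = _ from ((hdt 1 0).fun_sub (hdt 0 1)).deriv,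
    show w3 (v t) = fun z => pd3 0 (fun x => v t x 1) z - pd3 1 (fun x => v t x 0) z from rfl,
    fderiv_apply_eq_sum_pd3, fderiv_apply_eq_sum_pd3]
  simp only [pd3_sub ((hux 1).differentiableAt_pd3 0) ((hux 0).differentiableAt_pd3 1), ha_eq,
    hadv]
  simp only [Fin.sum_univ_three, curl, w3] at hdiv ⊢
  simp
  linear_combination -hPsymm - (pd3 0 (fun z => v t z 1) y - pd3 1 (fun z => v t z 0) y) * hdiv

end Vorticity

section CrossSection

variable {h t : ℝ} {v : ℝ → V3 → V3} {P : V3 → ℝ} {φ : V2 → ℝ} {p : V2}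

theorem swirl_transport (hh : h ≠ 0) (hφ : IsStreamFunctionAt h (v t) φ p)
    (hvt : ∀ i, DifferentiableAt ℝ (fun s => v s (emb p) i) t)
    (hvx : ∀ i, DifferentiableAt ℝ (fun z => v t z i) (emb p))
    (hhel : ∀ i, fderiv ℝ (fun z => v t z i) (emb p) (xiVec h (emb p)) = rotGen (v t (emb p)) i)
    (hPξ : fderiv ℝ P (emb p) (xiVec h (emb p)) = 0)
    (heuler : ∀ i, deriv (fun s => v s (emb p) i) t
      + ∑ j : Fin 3, v t (emb p) j * pd3 j (fun z => v t z i) (emb p) = -pd3 i P (emb p)) :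
    deriv (fun s => swirl h (v s) (emb p)) t
      + (pd2 1 φ p * pd2 0 (fun q => swirl h (v t) (emb q)) p
        - pd2 0 φ p * pd2 1 (fun q => swirl h (v t) (emb q)) p) = 0 := by
  rw [hφ.transport_eq hh (differentiableAt_swirl hvx) (fderiv_swirl_xiVec hvx hhel),
    swirl_material_derivative h hvt hvx heuler, hPξ, neg_zero]

theorem LK_eq_of_isStreamFunctionAt {u : V3 → V3} (hh : h ≠ 0)
    (hu : ∀ i, DifferentiableAt ℝ (fun z => u z i) (emb p))
    (hφ : ∀ᶠ q in 𝓝 p, IsStreamFunctionAt h u φ q) :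
    LK h φ p =
      w3 u (emb p) + 2 * h ^ 2 * swirl h u (emb p) / (h ^ 2 + (p 0) ^ 2 + (p 1) ^ 2) ^ 2
        + (p 0 * pd2 0 (fun q => swirl h u (emb q)) p + p 1 * pd2 1 (fun q => swirl h u (emb q)) p)
          / (h ^ 2 + (p 0) ^ 2 + (p 1) ^ 2) := by
  rw [LK_eq_w3_orthPart hh hu hφ, w3_orthPart hh hu, pd2_comp_emb (differentiableAt_swirl hu),
    pd2_comp_emb (differentiableAt_swirl hu), xiNormSq_emb]
  rfl

theorem w3_transport (hh : h ≠ 0) (hφ : ∀ᶠ q in 𝓝 p, IsStreamFunctionAt h (v t) φ q)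
    (hv : ∀ i, ContDiffAt ℝ 2 (fun q : ℝ × V3 => v q.1 q.2 i) (t, emb p))
    (hP : ∀ᶠ z in 𝓝 (emb p), DifferentiableAt ℝ P z)
    (hhel : ∀ᶠ z in 𝓝 (emb p), ∀ i,
      fderiv ℝ (fun x => v t x i) z (xiVec h z) = rotGen (v t z) i)
    (heuler : ∀ᶠ z in 𝓝 (emb p), ∀ i, deriv (fun s => v s z i) t
      + ∑ j : Fin 3, v t z j * pd3 j (fun x => v t x i) z = -pd3 i P z)
    (hdiv : ∑ i : Fin 3, pd3 i (fun z => v t z i) (emb p) = 0) :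
    deriv (fun s => w3 (v s) (emb p)) t
        + (pd2 1 φ p * pd2 0 (fun q => w3 (v t) (emb q)) p
          - pd2 0 φ p * pd2 1 (fun q => w3 (v t) (emb q)) p) =
      pd2 0 (fun q => swirl h (v t) (emb q)) p *
          pd2 1 (fun q => (q 0 * pd2 0 φ q + q 1 * pd2 1 φ q) /
            (h ^ 2 + (q 0) ^ 2 + (q 1) ^ 2)) p
        - pd2 1 (fun q => swirl h (v t) (emb q)) p *
          pd2 0 (fun q => (q 0 * pd2 0 φ q + q 1 * pd2 1 φ q) /
            (h ^ 2 + (q 0) ^ 2 + (q 1) ^ 2)) p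
        + 2 * swirl h (v t) (emb p) *
            (p 1 * pd2 0 (fun q => swirl h (v t) (emb q)) p
              - p 0 * pd2 1 (fun q => swirl h (v t) (emb q)) p) /
            (h ^ 2 + (p 0) ^ 2 + (p 1) ^ 2) ^ 2 := by
  have hux : ∀ i, ContDiffAt ℝ 2 (fun z => v t z i) (emb p) :=
    fun i => (hv i).space_slice
  have hud : ∀ i, DifferentiableAt ℝ (fun z => v t z i) (emb p) :=
    fun i => (hux i).differentiableAt two_ne_zero
  have hw : DifferentiableAt ℝ (w3 (v t)) (emb p) :=
    ((hux 1).differentiableAt_pd3 0).sub ((hux 0).differentiableAt_pd3 1)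
  have hS := differentiableAt_swirl (h := h) hud
  rw [hφ.self_of_nhds.transport_eq hh hw (fderiv_w3_xiVec hux hhel),
    w3_material_derivative hv hP heuler hdiv, fderiv_curl_of_helical hh hud hhel.self_of_nhds,
    pd2_radial_of_isStreamFunctionAt hh hud hφ, pd2_radial_of_isStreamFunctionAt hh hud hφ,
    pd2_comp_emb hS, pd2_comp_emb hS, xiNormSq_emb]
  have hN0 : h ^ 2 + p 0 ^ 2 + p 1 ^ 2 ≠ 0 := by positivity
  simp only [Fin.castSucc_zero, Fin.castSucc_one]
  field_simp
  ring

end CrossSection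

theorem twoD_vorticity_stream_formulation_general (h T : ℝ) (hh : 0 < h)
    (Ω : Set V3) (hΩopen : IsOpen Ω)
    (D : Set V2) (hD : D = {p : V2 | emb p ∈ Ω})
    (v : ℝ → V3 → V3) (P : ℝ → V3 → ℝ)
    (hv : ∀ i : Fin 3, ContDiffOn ℝ 2 (fun q : ℝ × V3 => v q.1 q.2 i)
      (Set.Ioo 0 T ×ˢ Ω))
    (hP : ContDiffOn ℝ 1 (fun q : ℝ × V3 => P q.1 q.2) (Set.Ioo 0 T ×ˢ Ω))
    (hhel : ∀ t ∈ Set.Ioo (0 : ℝ) T, ∀ θ : ℝ, ∀ x ∈ Ω,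
      v t (Hmap h θ x) = Qrot θ (v t x) ∧ P t (Hmap h θ x) = P t x)
    (heuler : ∀ t ∈ Set.Ioo (0 : ℝ) T, ∀ x ∈ Ω, ∀ i : Fin 3,
      deriv (fun s => v s x i) t
        + ∑ j : Fin 3, v t x j * pd3 j (fun y => v t y i) x = -(pd3 i (P t) x))
    (hdiv : ∀ t ∈ Set.Ioo (0 : ℝ) T, ∀ x ∈ Ω,
      ∑ i : Fin 3, pd3 i (fun y => v t y i) x = 0)
    -- the stream function of the orthogonal part of `v(⋅,t)`
    (φ : ℝ → V2 → ℝ)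
    (hφ : ∀ t ∈ Set.Ioo (0 : ℝ) T, ∀ p ∈ D,
      orthPart h (v t) (emb p) 0 =
        (-(p 0 * p 1) * pd2 0 (φ t) p + (h ^ 2 + (p 0) ^ 2) * pd2 1 (φ t) p) /
          (h ^ 2 + (p 0) ^ 2 + (p 1) ^ 2) ∧
      orthPart h (v t) (emb p) 1 =
        (-(h ^ 2 + (p 1) ^ 2) * pd2 0 (φ t) p + p 0 * p 1 * pd2 1 (φ t) p) /
          (h ^ 2 + (p 0) ^ 2 + (p 1) ^ 2)) :
    -- the 2D restrictions of the swirl and of `w₃`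
    ∀ t ∈ Set.Ioo (0 : ℝ) T, ∀ p ∈ D,
      (deriv (fun s => swirl h (v s) (emb p)) t
          + (pd2 1 (φ t) p * pd2 0 (fun q => swirl h (v t) (emb q)) p
            - pd2 0 (φ t) p * pd2 1 (fun q => swirl h (v t) (emb q)) p) = 0) ∧
      (deriv (fun s => w3 (v s) (emb p)) t
          + (pd2 1 (φ t) p * pd2 0 (fun q => w3 (v t) (emb q)) p
            - pd2 0 (φ t) p * pd2 1 (fun q => w3 (v t) (emb q)) p) =
        pd2 0 (fun q => swirl h (v t) (emb q)) p *
            pd2 1 (fun q => (q 0 * pd2 0 (φ t) q + q 1 * pd2 1 (φ t) q) /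
              (h ^ 2 + (q 0) ^ 2 + (q 1) ^ 2)) p
          - pd2 1 (fun q => swirl h (v t) (emb q)) p *
            pd2 0 (fun q => (q 0 * pd2 0 (φ t) q + q 1 * pd2 1 (φ t) q) /
              (h ^ 2 + (q 0) ^ 2 + (q 1) ^ 2)) p
          + 2 * swirl h (v t) (emb p) *
              (p 1 * pd2 0 (fun q => swirl h (v t) (emb q)) p
                - p 0 * pd2 1 (fun q => swirl h (v t) (emb q)) p) /
              (h ^ 2 + (p 0) ^ 2 + (p 1) ^ 2) ^ 2) ∧
      (LK h (φ t) p =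
        w3 (v t) (emb p)
          + 2 * h ^ 2 * swirl h (v t) (emb p) /
              (h ^ 2 + (p 0) ^ 2 + (p 1) ^ 2) ^ 2
          + (p 0 * pd2 0 (fun q => swirl h (v t) (emb q)) p
              + p 1 * pd2 1 (fun q => swirl h (v t) (emb q)) p) /
              (h ^ 2 + (p 0) ^ 2 + (p 1) ^ 2)) := by
  intro t ht p hp
  subst hD
  have hy : emb p ∈ Ω := hp
  have hnear : ∀ᶠ z in 𝓝 (emb p), z ∈ Ω := hΩopen.mem_nhds hy
  have hvx : ∀ z ∈ Ω, ∀ i, ContDiffAt ℝ 2 (fun x => v t x i) z :=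
    fun z hz i => (hv i).contDiffAt_space_slice isOpen_Ioo hΩopen ht hz
  have hPx : ∀ z ∈ Ω, DifferentiableAt ℝ (P t) z :=
    fun z hz => (hP.contDiffAt_space_slice isOpen_Ioo hΩopen ht hz).differentiableAt one_ne_zero
  have hinf : ∀ z ∈ Ω, _ := fun z hz => fderiv_xiVec_of_helical (hhel t ht · z hz)
    (fun i => (hvx z hz i).differentiableAt two_ne_zero) (hPx z hz)
  have hvC : ∀ i, ContDiffAt ℝ 2 (fun q : ℝ × V3 => v q.1 q.2 i) (t, emb p) :=
    fun i => (hv i).contDiffAt ((isOpen_Ioo.prod hΩopen).mem_nhds ⟨ht, hy⟩)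
  have hstream : ∀ᶠ q in 𝓝 p, IsStreamFunctionAt h (v t) (φ t) q :=
    Filter.Eventually.mono ((hΩopen.preimage continuous_emb).mem_nhds hp) (hφ t ht)
  refine ⟨swirl_transport hh.ne' hstream.self_of_nhds
      (fun i => (hasDerivAt_time_slice ((hvC i).differentiableAt two_ne_zero)).differentiableAt)
      (fun i => (hvx _ hy i).differentiableAt two_ne_zero) (hinf _ hy).1 (hinf _ hy).2
      (heuler t ht _ hy),
    w3_transport hh.ne' hstream hvC (hnear.mono hPx) (hnear.mono fun z hz => (hinf z hz).1)
      (hnear.mono (heuler t ht)) (hdiv t ht _ hy),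
    LK_eq_of_isStreamFunctionAt hh.ne' (fun i => (hvx _ hy i).differentiableAt two_ne_zero)
      hstream⟩

/-- 2D vorticity-stream formulation of the 3D Euler equations under helical symmetry
with swirl: the restrictions `v(x₁,x₂,t) = v_ξ(x₁,x₂,0,t)` and `w(x₁,x₂,t) = w₃(x₁,x₂,0,t)`
satisfy the evolved system on `D × (0,T)`. -/
theorem twoD_vorticity_stream_formulation (h T : ℝ) (hh : 0 < h) (hT : 0 < T)
    (Ω : Set V3) (hΩopen : IsOpen Ω) (hΩ : ∀ θ : ℝ, Hmap h θ '' Ω = Ω)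
    (D : Set V2) (hD : D = {p : V2 | emb p ∈ Ω})
    (hDconn : IsConnected D) (hDsc : SimplyConnectedSpace D)
    (hDbdd : Bornology.IsBounded D)
    (v : ℝ → V3 → V3) (P : ℝ → V3 → ℝ)
    (hv : ∀ i : Fin 3, ContDiffOn ℝ 2 (fun q : ℝ × V3 => v q.1 q.2 i)
      (Set.Ioo 0 T ×ˢ Ω))
    (hP : ContDiffOn ℝ 1 (fun q : ℝ × V3 => P q.1 q.2) (Set.Ioo 0 T ×ˢ Ω))
    (hhel : ∀ t ∈ Set.Ioo (0 : ℝ) T, ∀ θ : ℝ, ∀ x ∈ Ω,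
      v t (Hmap h θ x) = Qrot θ (v t x) ∧ P t (Hmap h θ x) = P t x)
    (heuler : ∀ t ∈ Set.Ioo (0 : ℝ) T, ∀ x ∈ Ω, ∀ i : Fin 3,
      deriv (fun s => v s x i) t
        + ∑ j : Fin 3, v t x j * pd3 j (fun y => v t y i) x = -(pd3 i (P t) x))
    (hdiv : ∀ t ∈ Set.Ioo (0 : ℝ) T, ∀ x ∈ Ω,
      ∑ i : Fin 3, pd3 i (fun y => v t y i) x = 0)
    (hbc : ∀ t ∈ Set.Ioo (0 : ℝ) T, ∀ x ∈ frontier Ω, ∀ n : V3,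
      IsOutwardNormal Ω x n → ∑ i : Fin 3, v t x i * n i = 0)
    -- the stream function of the orthogonal part of `v(⋅,t)`
    (φ : ℝ → V2 → ℝ)
    (hφ0 : ∀ t ∈ Set.Ioo (0 : ℝ) T, ∀ p ∈ frontier D, φ t p = 0)
    (hφ : ∀ t ∈ Set.Ioo (0 : ℝ) T, ∀ p ∈ D,
      orthPart h (v t) (emb p) 0 =
        (-(p 0 * p 1) * pd2 0 (φ t) p + (h ^ 2 + (p 0) ^ 2) * pd2 1 (φ t) p) /
          (h ^ 2 + (p 0) ^ 2 + (p 1) ^ 2) ∧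
      orthPart h (v t) (emb p) 1 =
        (-(h ^ 2 + (p 1) ^ 2) * pd2 0 (φ t) p + p 0 * p 1 * pd2 1 (φ t) p) /
          (h ^ 2 + (p 0) ^ 2 + (p 1) ^ 2)) :
    -- the 2D restrictions of the swirl and of `w₃`
    ∀ t ∈ Set.Ioo (0 : ℝ) T, ∀ p ∈ D,
      (deriv (fun s => swirl h (v s) (emb p)) t
          + (pd2 1 (φ t) p * pd2 0 (fun q => swirl h (v t) (emb q)) p
            - pd2 0 (φ t) p * pd2 1 (fun q => swirl h (v t) (emb q)) p) = 0) ∧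
      (deriv (fun s => w3 (v s) (emb p)) t
          + (pd2 1 (φ t) p * pd2 0 (fun q => w3 (v t) (emb q)) p
            - pd2 0 (φ t) p * pd2 1 (fun q => w3 (v t) (emb q)) p) =
        pd2 0 (fun q => swirl h (v t) (emb q)) p *
            pd2 1 (fun q => (q 0 * pd2 0 (φ t) q + q 1 * pd2 1 (φ t) q) /
              (h ^ 2 + (q 0) ^ 2 + (q 1) ^ 2)) p
          - pd2 1 (fun q => swirl h (v t) (emb q)) p *
            pd2 0 (fun q => (q 0 * pd2 0 (φ t) q + q 1 * pd2 1 (φ t) q) /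
              (h ^ 2 + (q 0) ^ 2 + (q 1) ^ 2)) p
          + 2 * swirl h (v t) (emb p) *
              (p 1 * pd2 0 (fun q => swirl h (v t) (emb q)) p
                - p 0 * pd2 1 (fun q => swirl h (v t) (emb q)) p) /
              (h ^ 2 + (p 0) ^ 2 + (p 1) ^ 2) ^ 2) ∧
      (LK h (φ t) p =
        w3 (v t) (emb p)
          + 2 * h ^ 2 * swirl h (v t) (emb p) /
              (h ^ 2 + (p 0) ^ 2 + (p 1) ^ 2) ^ 2
          + (p 0 * pd2 0 (fun q => swirl h (v t) (emb q)) p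
              + p 1 * pd2 1 (fun q => swirl h (v t) (emb q)) p) /
              (h ^ 2 + (p 0) ^ 2 + (p 1) ^ 2)) :=
  twoD_vorticity_stream_formulation_general h T hh Ω hΩopen D hD v P hv hP hhel heuler hdiv φ hφ
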